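/- arXiv:2602.22135 — 6 statements merged into one kernel-verified Lean document; each statement's English description precedes it below -/
import Mathlib

section
/- A modality j forces a predicate P : A → Prop if and only if ◯_P ≤ j (pointwise: ∀ s, ◯_P s → j s). -/
def Oracle {A : Type*} (P : A → Prop) (s : Prop) : Prop :=
  ∀ r : Prop, (s → r) → (∀ a, (P a → r) → r) → r

theorem Oracle.query {A : Type*} (P : A → Prop) (a : A) : Oracle P (P a) :=
  fun _ hr hquery => hquery a hr

/-- `j s` is an admissible answer `r` in the eliminator of `Oracle P s`: it receives `s` by
inflation, and each query `P a` can be answered since `j (P a)` holds and `j (j s) → j s`. -/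
theorem Oracle.le_of_forces {A : Type*} {P : A → Prop} {j : Prop → Prop}
    (mono : ∀ p q : Prop, (p → q) → (j p → j q))
    (infl : ∀ p : Prop, p → j p)
    (idem : ∀ p : Prop, j (j p) → j p)
    (hP : ∀ a : A, j (P a)) {s : Prop} (hs : Oracle P s) : j s :=
  hs (j s) (infl s) fun a hanswer => idem s (mono (P a) (j s) hanswer (hP a))

theorem forces_iff_oracle_le {A : Type*} (P : A → Prop)
    (j : Prop → Prop)
    (mono : ∀ p q : Prop, (p → q) → (j p → j q))
    (infl : ∀ p : Prop, p → j p)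
    (idem : ∀ p : Prop, j (j p) → j p) :
    (∀ a : A, j (P a)) ↔ (∀ s : Prop, Oracle P s → j s) :=
  ⟨fun hP _ => Oracle.le_of_forces mono infl idem hP,
    fun hle a => hle (P a) (Oracle.query P a)⟩
end

section
/- The oracle modality of the excluded middle oracle is double negation: for the predicate lem : Prop → Prop defined by lem p := p ∨ ¬p, one has ◯_lem s ↔ ¬¬s for every proposition s. -/
theorem Oracle.not_not_of_forall_not_not {A : Type*} {P : A → Prop} {s : Prop}
    (hP : ∀ a, ¬¬P a) (h : Oracle P s) : ¬¬s :=
  fun hns => h False hns hP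

/-- Query the oracle about the goal `r` itself: if `¬r`, then `¬s`, contradicting `¬¬s`. -/
theorem Oracle.em_of_not_not {s : Prop} (h : ¬¬s) : Oracle (fun p : Prop => p ∨ ¬p) s :=
  fun r hs hem => hem r fun hr => hr.elim id fun hnr => absurd (fun hs' => hnr (hs hs')) h

theorem oracle_lem_eq_not_not :
    ∀ s : Prop, Oracle (fun p : Prop => p ∨ ¬ p) s ↔ ¬¬s :=
  fun _ => ⟨Oracle.not_not_of_forall_not_not not_not_em, Oracle.em_of_not_not⟩
end

section
/- For any predicate P : A → Prop, the oracle modality ◯_P is the least modality lying above the single-query map i_P, where i_P s := ∃ a : A, (P a → s). That is, i_P ≤ ◯_P pointwise, and for any modality j with i_P ≤ j one has ◯_P ≤ j. -/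
def instQuery {A : Type*} (P : A → Prop) (s : Prop) : Prop :=
  ∃ a : A, (P a → s)

section

variable {A : Type*} {P : A → Prop} {s : Prop}

theorem Oracle.of_instQuery : instQuery P s → Oracle P s := by
  rintro ⟨a, hs⟩ r hsr hquery
  exact hquery a fun ha => hsr (hs ha)

/-- Eliminate `Oracle P s` into `r := j s`; the query `P a` itself holds in `j`, witnessed by `a`. -/
theorem Oracle.le_of_instQuery_le {j : Prop → Prop} (mono : ∀ p q : Prop, (p → q) → (j p → j q))
    (pure : ∀ p : Prop, p → j p) (idem : ∀ p : Prop, j (j p) → j p)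
    (hquery : ∀ s : Prop, instQuery P s → j s) (hs : Oracle P s) : j s := by
  refine hs (j s) (pure s) fun a hask => ?_
  have hPa : j (P a) := hquery (P a) ⟨a, id⟩
  exact idem s (mono (P a) (j s) hask hPa)

end

theorem oracle_least_above_instance {A : Type*} (P : A → Prop) :
    (∀ s : Prop, instQuery P s → Oracle P s) ∧
    (∀ j : Prop → Prop,
      (∀ p q : Prop, (p → q) → (j p → j q)) →
      (∀ p : Prop, p → j p) →
      (∀ p : Prop, j (j p) → j p) →
      (∀ s : Prop, instQuery P s → j s) →
      (∀ s : Prop, Oracle P s → j s)) :=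
  ⟨fun _ => Oracle.of_instQuery,
    fun _ mono pure idem hquery _ => Oracle.le_of_instQuery_le mono pure idem hquery⟩
end

section
/- The oracle modality construction is functorial on propositional containers: given a morphism of propositional containers from (A,P) to (B,Q), i.e., maps t : A → B and q : ∀ a, Q (t a) → P a, one has ◯_P ≤ ◯_Q. -/
theorem oracle_functorial {A B : Type*} (P : A → Prop) (Q : B → Prop)
    (t : A → B) (q : ∀ a : A, Q (t a) → P a) :
    ∀ s : Prop, Oracle P s → Oracle Q s :=
  fun _ hP r hs hQ => hP r hs fun a k => hQ (t a) (k ∘ q a)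
end

section
/- Suprema of oracle modalities: for an I-indexed family of predicates P_i : A_i → Prop, the oracle modality of the sum predicate ΣP : (Σ i, A_i) → Prop, defined by ΣP (i,a) := P_i a, is the supremum of the family of modalities ◯_{P_i}: each ◯_{P_i} ≤ ◯_{ΣP}, and for any modality j, if ◯_{P_i} ≤ j for all i then ◯_{ΣP} ≤ j. -/
/-! ◯_P is the least modality `j` with `j (P a)` for every query `a`. The queries of the sum
oracle are exactly the queries `P i a` of the component oracles, so a modality dominates `◯_{ΣP}`
iff it dominates every `◯_{P i}`. -/

namespace Oracle

variable {A B : Type*} {P : A → Prop} {s : Prop}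

theorem query_s12 (a : A) : Oracle P (P a) :=
  fun _ hs hP => hP a hs

theorem of_comp {Q : B → Prop} (f : A → B) (h : Oracle (Q ∘ f) s) : Oracle Q s :=
  fun r hs hQ => h r hs fun a => hQ (f a)

theorem le_of_forall_query {j : Prop → Prop} (mono : ∀ p q : Prop, (p → q) → j p → j q)
    (unit : ∀ p : Prop, p → j p) (join : ∀ p : Prop, j (j p) → j p) (hP : ∀ a, j (P a))
    (h : Oracle P s) : j s :=
  h (j s) (unit s) fun a ha => join s (mono _ _ ha (hP a))

end Oracle

theorem oracle_sup {I : Type*} {A : I → Type*} (P : ∀ i, A i → Prop) :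
    (∀ i : I, ∀ s : Prop, Oracle (P i) s →
      Oracle (fun x : Σ i, A i => P x.1 x.2) s) ∧
    (∀ j : Prop → Prop,
      (∀ p q : Prop, (p → q) → (j p → j q)) →
      (∀ p : Prop, p → j p) →
      (∀ p : Prop, j (j p) → j p) →
      (∀ i : I, ∀ s : Prop, Oracle (P i) s → j s) →
      (∀ s : Prop, Oracle (fun x : Σ i, A i => P x.1 x.2) s → j s)) := by
  refine ⟨fun i s h => Oracle.of_comp (Sigma.mk i) h, ?_⟩
  intro j mono unit join hle s
  exact Oracle.le_of_forall_query mono unit join fun ⟨i, a⟩ => hle i (P i a) (Oracle.query_s12 a)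
end

section
/- Every map between P-sheaves is a homomorphism of the structure maps: if X and Y are P-sheaves with structure maps d_X and d_Y, then for every f : X → Y, a : A, and h : P a → X, f (d_X a h) = d_Y a (f ∘ h). -/
theorem sheaf_maps_are_homomorphisms_general {A : Type*} (P : A → Prop)
    (X Y : Type*)
    (dX : ∀ a : A, (P a → X) → X)
    (hdX : ∀ a (h : P a → X) (u : P a), dX a h = h u)
    (dY : ∀ a : A, (P a → Y) → Y)
    (hdY : ∀ a (h : P a → Y) (u : P a), dY a h = h u)
    (heqY : ∀ a : A, ∀ x y : Y, (P a → x = y) → x = y)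
    (f : X → Y) (a : A) (h : P a → X) :
    f (dX a h) = dY a (f ∘ h) :=
  heqY a _ _ fun u => (congrArg f (hdX a h u)).trans (hdY a (f ∘ h) u).symm

theorem sheaf_maps_are_homomorphisms {A : Type*} (P : A → Prop)
    (X Y : Type*)
    (dX : ∀ a : A, (P a → X) → X)
    (hdX : ∀ a (h : P a → X) (u : P a), dX a h = h u)
    (heqX : ∀ a : A, ∀ x y : X, (P a → x = y) → x = y)
    (dY : ∀ a : A, (P a → Y) → Y)
    (hdY : ∀ a (h : P a → Y) (u : P a), dY a h = h u)
    (heqY : ∀ a : A, ∀ x y : Y, (P a → x = y) → x = y)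
    (f : X → Y) (a : A) (h : P a → X) :
    f (dX a h) = dY a (f ∘ h) :=
  sheaf_maps_are_homomorphisms_general P X Y dX hdX dY hdY heqY f a h
end
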